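/- arXiv:2409.01899 — 4 statements merged into one kernel-verified Lean document; each statement's English description precedes it below -/
import Mathlib

section
/- Let n ≥ 1 and let x_i = cos((2i − 1)π/(2n)) for i = 1, …, n be the Gauss–Chebyshev nodes of the first kind. Then for every real polynomial p of degree at most 2n − 1, ∫_{−1}^{1} p(x) (1 − x²)^{−1/2} dx = (π/n) Σ_{i=1}^{n} p(x_i). That is, the n-point Gauss–Chebyshev quadrature rule of the first kind, with equal weights π/n, is exact on all polynomials of degree up to 2n − 1. -/
open Real MeasureTheory intervalIntegral

/-! Substituting `x = cos θ` turns the weighted integral into `∫_0^π p(cos θ) dθ`, i.e. an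
integral against Mathlib's Chebyshev measure `measureT`. Writing `p` in the Chebyshev basis
`T_0, …, T_{2n-1}`, both sides are linear in `p`; on `T_0` both equal `π`, and for
`0 < k < 2n` the integral `∫_0^π cos (kθ) dθ` and the node sum `∑ᵢ cos (k (2i+1)π/(2n))`
both vanish. This argument is Mathlib's `Polynomial.Chebyshev.integral_eq_sumZeroes`. -/

open Polynomial Chebyshev Finset

theorem rpow_neg_one_div_two_eq_sqrt_inv {a : ℝ} (ha : 0 ≤ a) : a ^ (-(1:ℝ)/2) = (√a)⁻¹ := by
  rw [neg_div, rpow_neg ha, sqrt_eq_rpow]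

theorem integral_mul_one_sub_sq_rpow_eq_integral_measureT (f : ℝ → ℝ) :
    ∫ x in (-1:ℝ)..1, f x * (1 - x ^ 2) ^ (-(1:ℝ)/2) = ∫ x, f x ∂measureT := by
  rw [integral_measureT]
  refine integral_congr fun x hx => ?_
  rw [Set.uIcc_of_le (by norm_num)] at hx
  have hx_sq : 0 ≤ 1 - x ^ 2 := by nlinarith [hx.1, hx.2]
  simp only [rpow_neg_one_div_two_eq_sqrt_inv hx_sq, sqrt_inv]

theorem sumZeroes_eq_sum_Icc (n : ℕ) (P : ℝ[X]) :
    sumZeroes n P = π / n * ∑ i ∈ Icc 1 n, P.eval (cos ((2 * i - 1) * π / (2 * n))) := by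
  rw [sumZeroes, ← Ico_add_one_right_eq_Icc, sum_Ico_eq_sum_range, Nat.add_sub_cancel]
  congr 2 with i
  push_cast
  ring_nf

/-- The `n`-point Gauss–Chebyshev quadrature rule of the first kind, with nodes
`cos ((2i - 1)π / (2n))` and equal weights `π / n`, is exact on all real polynomials
of degree at most `2n - 1` for the weight `(1 - x²)^(-1/2)` on `(-1, 1)`. -/
theorem gauss_chebyshev_first_kind_exact
    (n : ℕ) (hn : 1 ≤ n) (p : Polynomial ℝ)
    (hdeg : p.degree ≤ (2 * n - 1 : ℕ)) :
    ∫ x in (-1:ℝ)..1, p.eval x * (1 - x ^ 2) ^ (-(1:ℝ)/2)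
      = (Real.pi / n) *
        ∑ i ∈ Finset.Icc 1 n, p.eval (Real.cos ((2 * (i:ℝ) - 1) * Real.pi / (2 * n))) := by
  have hdeg_lt : p.degree < 2 * n :=
    hdeg.trans_lt (by exact_mod_cast (by omega : 2 * n - 1 < 2 * n))
  rw [integral_mul_one_sub_sq_rpow_eq_integral_measureT,
    integral_eq_sumZeroes (by omega) hdeg_lt, sumZeroes_eq_sum_Icc]
end

section
/- Let n ≥ 1 and let x_i = cos(iπ/(n + 1)) for i = 1, …, n be the Gauss–Chebyshev nodes of the second kind, with weights w_i = (π/(n + 1)) sin²(iπ/(n + 1)). Then for every real polynomial p of degree at most 2n − 1, ∫_{−1}^{1} p(x) √(1 − x²) dx = Σ_{i=1}^{n} w_i p(x_i). That is, the n-point Gauss–Chebyshev quadrature rule of the second kind is exact on all polynomials of degree up to 2n − 1. -/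
open Real MeasureTheory intervalIntegral

/-!
Since `(1 - x²) / √(1 - x²) = √(1 - x²)`, the integral is the Chebyshev integral
`∫ q(x) / √(1 - x²) dx` of `q = p · (1 - X²)`, a polynomial of degree `< 2(n + 1)` vanishing at
`±1`. The Gauss–Lobatto rule with nodes the extrema `cos (iπ/N)` of `T_N` integrates such
polynomials exactly for `N = n + 1`: after `x = cos θ` it is the equispaced rule on the circle,
which is exact on `cos (kθ) = T_k(cos θ)` for `0 ≤ k < 2N` because the `k`-th powers of the
`2N`-th roots of unity sum to zero. As `q` vanishes at the end nodes `±1`, only the interior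
nodes remain, with `q (cos θ) = p (cos θ) sin² θ`.
-/

open Finset

theorem Real.sum_range_cos_two_pi_mul_div_mul_eq_zero {M : ℕ} {k : ℤ} (hk : ¬ (M : ℤ) ∣ k) :
    ∑ i ∈ range M, cos (2 * π * k / M * i) = 0 := by
  rcases eq_or_ne M 0 with rfl | hM
  · simp
  have hne : ∀ m : ℤ, 2 * π * k / M ≠ m * (2 * π) := by
    intro m h
    refine hk ⟨m, ?_⟩
    have : (k : ℝ) = M * m := by field_simp at h; exact h
    exact_mod_cast this
  simpa [show (M : ℝ) * (2 * π * k / M) / 2 = k * π by field_simp, sin_int_mul_pi]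
    using sum_cos M hne 0

theorem Finset.sum_range_two_mul_eq_two_nsmul_sum_Icc {M : Type*} [AddCommMonoid M]
    (f : ℕ → M) (n : ℕ) (h0 : f 0 = 0) (hn : f (n + 1) = 0)
    (hf : ∀ i ≤ 2 * (n + 1), f (2 * (n + 1) - i) = f i) :
    ∑ i ∈ range (2 * (n + 1)), f i = 2 • ∑ i ∈ Icc 1 n, f i := by
  have hIcc : ∑ i ∈ Icc 1 n, f i = ∑ i ∈ range n, f (i + 1) := by
    rw [← Ico_add_one_right_eq_Icc, sum_Ico_eq_sum_range]
    simp [add_comm]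
  have hupper : ∑ i ∈ range (n + 1), f (n + 1 + i) = ∑ i ∈ range n, f (i + 1) := by
    rw [sum_range_succ', ← sum_range_reflect]
    simp only [add_zero, hn]
    refine sum_congr rfl fun i hi => ?_
    have hin := mem_range.1 hi
    rw [← hf _ (by omega)]
    congr 1
    omega
  rw [two_mul, sum_range_add, hupper, sum_range_succ', h0, add_zero, hIcc, two_nsmul]

namespace Polynomial.Chebyshev

noncomputable def integralMeasureT : ℝ[X] →ₗ[ℝ] ℝ where
  toFun P := ∫ x, P.eval x ∂measureT
  map_add' P Q := by
    simp only [eval_add]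
    exact integral_add (integrable_measureT (by fun_prop)) (integrable_measureT (by fun_prop))
  map_smul' c P := by simp [MeasureTheory.integral_const_mul]

theorem integralMeasureT_apply (P : ℝ[X]) :
    integralMeasureT P = ∫ x, P.eval x ∂measureT :=
  rfl

/-- Summing over the whole circle counts each interior node `cos (iπ/N)`, `0 < i < N`, twice and
the end nodes `±1` once: these are the Gauss–Lobatto–Chebyshev weights. -/
noncomputable def sumExtrema (N : ℕ) : ℝ[X] →ₗ[ℝ] ℝ :=
  (π / (2 * N)) • ∑ i ∈ range (2 * N), leval (cos (i * π / N))

theorem sumExtrema_apply (N : ℕ) (P : ℝ[X]) :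
    sumExtrema N P = π / (2 * N) * ∑ i ∈ range (2 * N), P.eval (cos (i * π / N)) := by
  simp [sumExtrema]

theorem integralMeasureT_T_eq_sumExtrema {N k : ℕ} (hk : k < 2 * N) :
    integralMeasureT (T ℝ k) = sumExtrema N (T ℝ k) := by
  have hN : (N : ℝ) ≠ 0 := by norm_cast; omega
  rw [integralMeasureT_apply, sumExtrema_apply]
  rcases eq_or_ne k 0 with rfl | hk0
  · rw [Nat.cast_zero, integral_eval_T_real_measureT_zero, T_zero]
    simp only [eval_one, sum_const, card_range, nsmul_eq_mul, mul_one]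
    push_cast
    field_simp
  · have hdvd : ¬ ((2 * N : ℕ) : ℤ) ∣ k := by
      rw [Int.natCast_dvd_natCast]
      exact fun h => hk0 (Nat.eq_zero_of_dvd_of_lt h hk)
    have hsum : ∑ i ∈ range (2 * N), cos (k * (i * π / N)) = 0 := by
      rw [← sum_range_cos_two_pi_mul_div_mul_eq_zero hdvd]
      refine sum_congr rfl fun i _ => congrArg cos ?_
      push_cast
      field_simp
    rw [integral_eval_T_real_measureT_of_ne_zero (Int.natCast_ne_zero.2 hk0)]
    simp only [T_real_cos, Int.cast_natCast, hsum, mul_zero]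

theorem integral_eq_sumExtrema {N : ℕ} {P : ℝ[X]} (hP : P.degree < 2 * N) :
    ∫ x, P.eval x ∂measureT = sumExtrema N P := by
  have hmem : P ∈ degreeLT ℝ (2 * N) := mem_degreeLT.2 (by exact_mod_cast hP)
  rw [← Sequence.span_degreeLT (chebyshevTsequence ℝ) (by simp)] at hmem
  refine LinearMap.eqOn_span (f := integralMeasureT) ?_ hmem
  rintro _ ⟨k, hk, rfl⟩
  exact integralMeasureT_T_eq_sumExtrema hk

theorem integral_mul_sqrt_one_sub_sq_eq_integral_measureT (p : ℝ[X]) :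
    ∫ x in (-1:ℝ)..1, p.eval x * √(1 - x ^ 2) = ∫ x, (p * (1 - X ^ 2)).eval x ∂measureT := by
  rw [integral_measureT]
  refine intervalIntegral.integral_congr fun x _ => ?_
  simp only [eval_mul, eval_sub, eval_one, eval_pow, eval_X]
  rw [sqrt_inv, ← div_eq_mul_inv, mul_div_assoc, div_sqrt]

theorem sumExtrema_mul_one_sub_X_sq (n : ℕ) (p : ℝ[X]) :
    sumExtrema (n + 1) (p * (1 - X ^ 2)) = ∑ i ∈ Icc 1 n,
      π / (n + 1) * sin (i * π / (n + 1)) ^ 2 * p.eval (cos (i * π / (n + 1))) := by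
  set f : ℕ → ℝ := fun i => (p * (1 - X ^ 2)).eval (cos (i * π / (n + 1))) with hf
  have hN : (n + 1 : ℝ) ≠ 0 := by positivity
  have h0 : f 0 = 0 := by simp [hf]
  have hn : f (n + 1) = 0 := by simp [hf, show ((n : ℝ) + 1) * π / (n + 1) = π by field_simp]
  have hsymm : ∀ i ≤ 2 * (n + 1), f (2 * (n + 1) - i) = f i := by
    intro i hi
    simp only [hf, Nat.cast_sub hi]
    push_cast
    rw [show (2 * (n + 1) - i : ℝ) * π / (n + 1) = 2 * π - i * π / (n + 1) by field_simp,
      cos_two_pi_sub]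
  rw [sumExtrema_apply]
  push_cast
  rw [sum_range_two_mul_eq_two_nsmul_sum_Icc f n h0 hn hsymm, nsmul_eq_mul, Nat.cast_ofNat,
    mul_sum, mul_sum]
  refine sum_congr rfl fun i _ => ?_
  simp only [hf, eval_mul, eval_sub, eval_one, eval_pow, eval_X, ← sin_sq]
  field_simp

end Polynomial.Chebyshev

open Polynomial Polynomial.Chebyshev

/-- The `n`-point Gauss–Chebyshev quadrature rule of the second kind, with nodes
`cos (iπ / (n + 1))` and weights `(π / (n + 1)) sin² (iπ / (n + 1))`, is exact on all
real polynomials of degree at most `2n - 1` for the weight `√(1 - x²)` on `[-1, 1]`. -/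
theorem gauss_chebyshev_second_kind_exact
    (n : ℕ) (hn : 1 ≤ n) (p : Polynomial ℝ)
    (hdeg : p.degree ≤ (2 * n - 1 : ℕ)) :
    ∫ x in (-1:ℝ)..1, p.eval x * Real.sqrt (1 - x ^ 2)
      = ∑ i ∈ Finset.Icc 1 n,
          (Real.pi / (n + 1)) * (Real.sin ((i:ℝ) * Real.pi / (n + 1))) ^ 2 *
            p.eval (Real.cos ((i:ℝ) * Real.pi / (n + 1))) := by
  have hdeg' : (p * (1 - X ^ 2)).degree < 2 * ((n + 1 : ℕ) : WithBot ℕ) :=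
    calc (p * (1 - X ^ 2)).degree ≤ ((2 * n - 1 : ℕ) : WithBot ℕ) + (2 : ℕ) :=
          (degree_mul_le _ _).trans (add_le_add hdeg (by compute_degree!))
      _ < 2 * ((n + 1 : ℕ) : WithBot ℕ) := by norm_cast; omega
  rw [integral_mul_sqrt_one_sub_sq_eq_integral_measureT, integral_eq_sumExtrema hdeg',
    sumExtrema_mul_one_sub_X_sq]
end

section
/- Let m and n be natural numbers with m ≠ n. Then ∫_{−1}^{1} T_m(x) T_n(x) (1 − x²)^{−1/2} dx = 0, where T_k denotes the Chebyshev polynomial of the first kind. That is, the Chebyshev polynomials of the first kind are pairwise orthogonal on (−1, 1) with respect to the weight function ω(x) = 1/√(1 − x²). -/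
open Real MeasureTheory intervalIntegral

lemma integral_cos_int_mul (k : ℤ) (hk : k ≠ 0) :
    ∫ θ in (0:ℝ)..π, Real.cos (k * θ) = 0 := by
  have hk' : (k : ℝ) ≠ 0 := Int.cast_ne_zero.mpr hk
  rw [intervalIntegral.integral_comp_mul_left (fun x => Real.cos x) hk']
  simp [Real.sin_int_mul_pi]

lemma integral_cos_mul_cos_eq_zero (m n : ℕ) (hmn : m ≠ n) :
    ∫ θ in (0:ℝ)..π, Real.cos (m * θ) * Real.cos (n * θ) = 0 := by
  have key : ∀ θ : ℝ, Real.cos (m * θ) * Real.cos (n * θ)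
      = (Real.cos ((((m : ℤ) + n) : ℤ) * θ) + Real.cos ((((m : ℤ) - n) : ℤ) * θ)) / 2 := by
    intro θ
    push_cast
    rw [add_mul, sub_mul, Real.cos_add, Real.cos_sub]
    ring
  simp_rw [key]
  have h1 : IntervalIntegrable (fun θ : ℝ => Real.cos ((((m : ℤ) + n) : ℤ) * θ))
      volume 0 π := (Real.continuous_cos.comp (continuous_const.mul continuous_id)).intervalIntegrable _ _
  have h2 : IntervalIntegrable (fun θ : ℝ => Real.cos ((((m : ℤ) - n) : ℤ) * θ))
      volume 0 π := (Real.continuous_cos.comp (continuous_const.mul continuous_id)).intervalIntegrable _ _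
  rw [intervalIntegral.integral_div, intervalIntegral.integral_add h1 h2,
    integral_cos_int_mul _ (by omega), integral_cos_int_mul _ (by
      intro h
      apply hmn
      omega)]
  norm_num

/-- The Chebyshev polynomials of the first kind are pairwise orthogonal on `(-1, 1)`
with respect to the weight function `(1 - x²)^(-1/2)`. -/
theorem chebyshev_T_orthogonal (m n : ℕ) (hmn : m ≠ n) :
    ∫ x in (-1:ℝ)..1,
        (Polynomial.Chebyshev.T ℝ m).eval x * (Polynomial.Chebyshev.T ℝ n).eval x *
          (1 - x ^ 2) ^ (-(1:ℝ)/2) = 0 := by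
  set g : ℝ → ℝ := fun x =>
    (Polynomial.Chebyshev.T ℝ m).eval x * (Polynomial.Chebyshev.T ℝ n).eval x *
      (1 - x ^ 2) ^ (-(1:ℝ)/2) with hg
  have h1 : (∫ x in (-1:ℝ)..1, g x) = ∫ x in Set.Icc (-1:ℝ) 1, g x := by
    rw [intervalIntegral.integral_of_le (by norm_num : (-1:ℝ) ≤ 1),
      MeasureTheory.integral_Icc_eq_integral_Ioc]
  have himg : Set.Icc (-1:ℝ) 1 = Real.cos '' Set.Icc 0 π := (Real.bijOn_cos.image_eq).symm
  have h2 : (∫ x in Set.Icc (-1:ℝ) 1, g x)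
      = ∫ θ in Set.Icc (0:ℝ) π, |(-Real.sin θ)| • g (Real.cos θ) := by
    rw [himg]
    exact integral_image_eq_integral_abs_deriv_smul measurableSet_Icc
      (fun θ _ => (Real.hasDerivAt_cos θ).hasDerivWithinAt) Real.injOn_cos g
  have h3 : (∫ θ in Set.Icc (0:ℝ) π, |(-Real.sin θ)| • g (Real.cos θ))
      = ∫ θ in Set.Icc (0:ℝ) π, Real.cos (m * θ) * Real.cos (n * θ) := by
    rw [MeasureTheory.integral_Icc_eq_integral_Ioc,
      MeasureTheory.integral_Icc_eq_integral_Ioc,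
      ← MeasureTheory.Measure.restrict_congr_set (MeasureTheory.Ioo_ae_eq_Ioc (μ := volume))]
    refine MeasureTheory.setIntegral_congr_fun (μ := volume) (f := fun θ : ℝ => |(-Real.sin θ)| • g (Real.cos θ)) (g := fun θ : ℝ => Real.cos (m * θ) * Real.cos (n * θ)) measurableSet_Ioo ?_
    intro θ hθ
    have hs : 0 < Real.sin θ := Real.sin_pos_of_pos_of_lt_pi hθ.1 hθ.2
    have habs : |(-Real.sin θ)| = Real.sin θ := by
      rw [abs_neg, abs_of_pos hs]
    have hsq : 1 - Real.cos θ ^ 2 = Real.sin θ ^ 2 := by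
      have := Real.sin_sq_add_cos_sq θ; linarith
    have hrpow : (Real.sin θ ^ 2) ^ (-(1:ℝ)/2) = (Real.sin θ)⁻¹ := by
      rw [← Real.rpow_natCast (Real.sin θ) 2, ← Real.rpow_mul hs.le]
      norm_num [Real.rpow_neg_one]
    have hTm : (Polynomial.Chebyshev.T ℝ m).eval (Real.cos θ) = Real.cos (m * θ) := by
      have := Polynomial.Chebyshev.T_real_cos θ (m : ℤ)
      push_cast at this ⊢
      exact this
    have hTn : (Polynomial.Chebyshev.T ℝ n).eval (Real.cos θ) = Real.cos (n * θ) := by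
      have := Polynomial.Chebyshev.T_real_cos θ (n : ℤ)
      push_cast at this ⊢
      exact this
    simp only [hg, smul_eq_mul, habs, hsq, hrpow, hTm, hTn]
    field_simp
  have h4 : (∫ θ in Set.Icc (0:ℝ) π, Real.cos (m * θ) * Real.cos (n * θ)) = 0 := by
    rw [MeasureTheory.integral_Icc_eq_integral_Ioc,
      ← intervalIntegral.integral_of_le Real.pi_pos.le]
    exact integral_cos_mul_cos_eq_zero m n hmn
  rw [show (∫ x in (-1:ℝ)..1,
      (Polynomial.Chebyshev.T ℝ m).eval x * (Polynomial.Chebyshev.T ℝ n).eval x *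
        (1 - x ^ 2) ^ (-(1:ℝ)/2)) = ∫ x in (-1:ℝ)..1, g x from rfl,
    h1, h2, h3, h4]
end

section
/- Let α > −1 be real and let m, n be natural numbers with m ≠ n. Then ∫_0^{∞} L_m^{(α)}(x) L_n^{(α)}(x) x^{α} e^{−x} dx = 0. That is, the generalized Laguerre polynomials with parameter α are pairwise orthogonal on [0, ∞) with respect to the weight function ω(x) = x^{α} e^{−x}. -/
open Real MeasureTheory Finset Nat

/-- The generalized Laguerre polynomial, given by the explicit formula
`L n^(α) x = ∑_{k=0}^{n} (-1)^k C(n + α, n - k) x^k / k!`, where the generalized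
binomial coefficient is `C(n + α, n - k) = Γ(n + α + 1) / (Γ(α + k + 1) (n - k)!)`. -/
noncomputable def genLaguerre (α : ℝ) (n : ℕ) (x : ℝ) : ℝ :=
  ∑ k ∈ Finset.range (n + 1),
    (-1 : ℝ) ^ k *
      (Real.Gamma ((n : ℝ) + α + 1) / (Real.Gamma (α + (k : ℝ) + 1) * ((n - k)! : ℝ))) *
      x ^ k / (k ! : ℝ)

/-!
Expanding `L_n^(α)` and integrating term by term against `x^α e^{-x}` turns the moment
`∫ x^j L_n^(α)(x) x^α e^{-x} dx` into `∑_k c_{n,k} Γ(α + j + k + 1)`. Since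
`Γ(α + k + 1 + j) = Γ(α + k + 1) (α + k + 1)_j`, this is `Γ(n + α + 1) / n!` times
`∑_k (-1)^k C(n, k) P(k)` with `P = (X + α + 1)_j` of degree `j`: up to sign the `n`-th forward
difference of `P`, which vanishes for `j < n`. So `L_n^(α)` is orthogonal to every polynomial of
degree `< n`, in particular to `L_m^(α)` for `m < n`.
-/

open Polynomial

theorem Polynomial.sum_range_neg_one_pow_mul_choose_mul_eval_eq_zero {R : Type*} [CommRing R]
    {P : R[X]} {n : ℕ} (hP : P.natDegree < n) :
    ∑ k ∈ range (n + 1), (-1 : R) ^ k * n.choose k * P.eval (k : R) = 0 := by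
  have hΔ := congr_fun (P.fwdDiff_iter_eq_zero_of_degree_lt hP) 0
  rw [fwdDiff_iter_eq_sum_shift, Pi.zero_apply] at hΔ
  calc ∑ k ∈ range (n + 1), (-1 : R) ^ k * n.choose k * P.eval (k : R)
      = (-1) ^ n * ∑ k ∈ range (n + 1),
          ((-1 : ℤ) ^ (n - k) * n.choose k) • P.eval (0 + k • 1) := by
        rw [mul_sum]
        refine sum_congr rfl fun k hk => ?_
        obtain ⟨i, rfl⟩ := Nat.exists_eq_add_of_le (mem_range_succ_iff.mp hk)
        rw [Nat.add_sub_cancel_left, zsmul_eq_mul, zero_add, nsmul_one]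
        push_cast
        rw [← mul_assoc, ← mul_assoc, pow_add, mul_assoc _ _ ((-1) ^ i), ← mul_pow,
          neg_one_mul, neg_neg, one_pow, mul_one]
    _ = 0 := by rw [hΔ, mul_zero]

theorem Real.Gamma_add_nat_eq_mul_ascPochhammer {z : ℝ} (hz : 0 < z) (j : ℕ) :
    Gamma (z + j) = Gamma z * (ascPochhammer ℝ j).eval z := by
  induction j with
  | zero => simp
  | succ j ih =>
    rw [Nat.cast_succ, ← add_assoc, Gamma_add_one (by positivity), ih, ascPochhammer_succ_eval]
    ring

theorem integrableOn_pow_mul_rpow_mul_exp_neg {α : ℝ} (hα : -1 < α) (d : ℕ) :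
    IntegrableOn (fun x : ℝ => x ^ d * x ^ α * exp (-x)) (Set.Ioi 0) := by
  have hs : 0 < α + d + 1 := by linarith [d.cast_nonneg (α := ℝ)]
  refine (GammaIntegral_convergent hs).congr_fun (fun x (hx : 0 < x) => ?_) measurableSet_Ioi
  dsimp only
  rw [add_sub_cancel_right, rpow_add hx, rpow_natCast]
  ring

theorem integral_pow_mul_rpow_mul_exp_neg {α : ℝ} (hα : -1 < α) (d : ℕ) :
    ∫ x in Set.Ioi (0 : ℝ), x ^ d * x ^ α * exp (-x) = Gamma (α + d + 1) := by
  rw [Gamma_eq_integral (by linarith [d.cast_nonneg (α := ℝ)])]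
  refine setIntegral_congr_fun measurableSet_Ioi (fun x (hx : 0 < x) => ?_)
  rw [add_sub_cancel_right, rpow_add hx, rpow_natCast]
  ring

noncomputable def genLaguerreCoeff (α : ℝ) (n k : ℕ) : ℝ :=
  (-1) ^ k * Gamma (n + α + 1) / (Gamma (α + k + 1) * (n - k)! * k !)

theorem genLaguerre_eq_sum (α : ℝ) (n : ℕ) (x : ℝ) :
    genLaguerre α n x = ∑ k ∈ range (n + 1), genLaguerreCoeff α n k * x ^ k :=
  sum_congr rfl fun k _ => by rw [genLaguerreCoeff]; ring

theorem pow_mul_genLaguerre_mul_rpow_mul_exp_neg_eq_sum (α : ℝ) (n j : ℕ) (x : ℝ) :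
    x ^ j * genLaguerre α n x * x ^ α * exp (-x) =
      ∑ k ∈ range (n + 1), genLaguerreCoeff α n k * (x ^ (j + k) * x ^ α * exp (-x)) := by
  rw [genLaguerre_eq_sum, mul_sum, sum_mul, sum_mul]
  exact sum_congr rfl fun k _ => by ring

theorem integrableOn_pow_mul_genLaguerre_mul_rpow_mul_exp_neg {α : ℝ} (hα : -1 < α)
    (n j : ℕ) :
    IntegrableOn (fun x => x ^ j * genLaguerre α n x * x ^ α * exp (-x)) (Set.Ioi 0) := by
  simp_rw [pow_mul_genLaguerre_mul_rpow_mul_exp_neg_eq_sum]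
  exact integrable_finsetSum _ fun k _ =>
    (integrableOn_pow_mul_rpow_mul_exp_neg hα _).const_mul _

theorem integral_pow_mul_genLaguerre_mul_rpow_mul_exp_neg {α : ℝ} (hα : -1 < α) (n j : ℕ) :
    ∫ x in Set.Ioi (0 : ℝ), x ^ j * genLaguerre α n x * x ^ α * exp (-x) =
      ∑ k ∈ range (n + 1), genLaguerreCoeff α n k * Gamma (α + ↑(j + k) + 1) := by
  simp_rw [pow_mul_genLaguerre_mul_rpow_mul_exp_neg_eq_sum]
  rw [integral_finsetSum _ fun k _ => (integrableOn_pow_mul_rpow_mul_exp_neg hα _).const_mul _]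
  simp_rw [integral_const_mul, integral_pow_mul_rpow_mul_exp_neg hα]

theorem sum_genLaguerreCoeff_mul_Gamma_eq_zero {α : ℝ} (hα : -1 < α) {n j : ℕ} (hj : j < n) :
    ∑ k ∈ range (n + 1), genLaguerreCoeff α n k * Gamma (α + ↑(j + k) + 1) = 0 := by
  set P : ℝ[X] := (ascPochhammer ℝ j).comp (X + C (α + 1))
  have hP : P.natDegree < n := by
    rwa [natDegree_comp, ascPochhammer_natDegree, natDegree_X_add_C, mul_one]
  have hterm : ∀ k ∈ range (n + 1), genLaguerreCoeff α n k * Gamma (α + ↑(j + k) + 1) =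
      Gamma (n + α + 1) / n ! * ((-1) ^ k * n.choose k * P.eval (k : ℝ)) := by
    intro k hk
    have hpos : 0 < α + k + 1 := by linarith [k.cast_nonneg (α := ℝ)]
    rw [show α + ↑(j + k) + 1 = α + k + 1 + j by push_cast; ring,
      Gamma_add_nat_eq_mul_ascPochhammer hpos, Nat.cast_choose ℝ (mem_range_succ_iff.mp hk)]
    simp only [P, eval_comp, eval_add, eval_X, eval_C, genLaguerreCoeff]
    rw [show (k : ℝ) + (α + 1) = α + k + 1 by ring]
    field_simp
  rw [sum_congr rfl hterm, ← mul_sum, P.sum_range_neg_one_pow_mul_choose_mul_eval_eq_zero hP,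
    mul_zero]

/-- For `α > -1`, the generalized Laguerre polynomials with parameter `α` are pairwise
orthogonal on `[0, ∞)` with respect to the weight function `x^α exp (-x)`. -/
theorem genLaguerre_orthogonal (α : ℝ) (hα : -1 < α) (m n : ℕ) (hmn : m ≠ n) :
    ∫ x in Set.Ioi (0:ℝ),
      genLaguerre α m x * genLaguerre α n x * x ^ α * Real.exp (-x) = 0 := by
  wlog hlt : m < n generalizing m n
  · simpa only [mul_comm (genLaguerre α n _) (genLaguerre α m _)] using
      this n m hmn.symm (by omega)
  have hexpand : ∀ x : ℝ, genLaguerre α m x * genLaguerre α n x * x ^ α * exp (-x) =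
      ∑ j ∈ range (m + 1),
        genLaguerreCoeff α m j * (x ^ j * genLaguerre α n x * x ^ α * exp (-x)) := by
    intro x
    rw [genLaguerre_eq_sum α m, sum_mul, sum_mul, sum_mul]
    exact sum_congr rfl fun j _ => by ring
  simp_rw [hexpand]
  rw [integral_finsetSum _ fun j _ =>
    (integrableOn_pow_mul_genLaguerre_mul_rpow_mul_exp_neg hα n j).const_mul _]
  refine sum_eq_zero fun j hj => ?_
  rw [integral_const_mul, integral_pow_mul_genLaguerre_mul_rpow_mul_exp_neg hα,
    sum_genLaguerreCoeff_mul_Gamma_eq_zero hα (by linarith [mem_range_succ_iff.mp hj]), mul_zero]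
end
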